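/- arXiv:2309.13070 — 6 statements merged into one kernel-verified Lean document; each statement's English description precedes it below -/
import Mathlib

section
/- For a prime p ≥ 7, let A_{00} = {a ∈ Z/pZ : a is a nonzero quadratic residue and a+1 is a nonzero quadratic residue mod p}. Then ∑_{a ∈ A_{00}} (a^2 + a) ≡ 1/32 (mod p), where 1/32 denotes the inverse of 32 in Z/pZ. -/
/-!
Sending `(x, y)` to `a = x²` maps the hyperbola `y² = x² + 1` onto the `a` with `a` and `a + 1`
both squares, and the fibre over `a` is (square roots of `a`) × (square roots of `a + 1`).
When `a` and `a + 1` are nonzero squares it has four points; otherwise it is empty or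
`a² + a = 0`. Hence `4 ∑ (a² + a)` is the sum of `x⁴ + x²` over the hyperbola.

The hyperbola is rational: `t = y - x` is a unit with `t⁻¹ = y + x`. With `x = (t⁻¹ - t) / 2`
the summand becomes `(t⁻⁴ + t⁴ - 2) / 16`. Over `Kˣ` the power sums of `t⁴` and `t⁻⁴` vanish
because `q - 1 ∤ 4`, and `∑ 1 = q - 1 = -1`, so `4 ∑ (a² + a) = 1 / 8`.
-/

open Finset

section Field

variable {K : Type*} [Field K]

def hyperbolaParam (t : Kˣ) : K × K := ((↑t⁻¹ - ↑t) / 2, (↑t⁻¹ + ↑t) / 2)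

theorem sixteen_mul_hyperbolaParam_fst (h2 : (2 : K) ≠ 0) (t : Kˣ) :
    16 * (((hyperbolaParam t).1 ^ 2) ^ 2 + (hyperbolaParam t).1 ^ 2) =
      (↑t⁻¹ : K) ^ 4 + (t : K) ^ 4 - 2 := by
  have ht : (↑t⁻¹ : K) * t = 1 := t.inv_mul
  simp only [hyperbolaParam]
  field_simp
  linear_combination 16 * (-4 * (↑t⁻¹ : K) ^ 2 - 4 * (t : K) ^ 2 + 6 * (↑t⁻¹ : K) * t - 2) * ht

end Field

section FiniteField

variable {K : Type*} [Field K] [Fintype K] [DecidableEq K]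

def sqrts (a : K) : Finset K := {x | x ^ 2 = a}

theorem card_sqrts_of_isSquare (hK : ringChar K ≠ 2) {a : K} (ha₀ : a ≠ 0) (ha : IsSquare a) :
    #(sqrts a) = 2 := by
  have h := quadraticChar_card_sqrts hK a
  rw [(quadraticChar_one_iff_isSquare ha₀).2 ha, Set.toFinset_ofPred] at h
  exact_mod_cast h

theorem card_sqrts_of_not_isSquare {a : K} (ha : ¬IsSquare a) : #(sqrts a) = 0 :=
  card_eq_zero.2 <| filter_eq_empty_iff.2 fun x _ hx => ha ⟨x, by rw [← hx, sq]⟩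

theorem card_sqrts_mul_card_sqrts_add_one_smul (hK : ringChar K ≠ 2) (a : K) :
    (#(sqrts a) * #(sqrts (a + 1))) • (a ^ 2 + a) =
      if (a ≠ 0 ∧ IsSquare a) ∧ (a + 1 ≠ 0 ∧ IsSquare (a + 1)) then 4 • (a ^ 2 + a) else 0 := by
  split_ifs with h
  · obtain ⟨⟨ha₀, ha⟩, hb₀, hb⟩ := h
    rw [card_sqrts_of_isSquare hK ha₀ ha, card_sqrts_of_isSquare hK hb₀ hb]
  by_cases hF : a ^ 2 + a = 0
  · rw [hF, smul_zero]
  have ha₀ : a ≠ 0 := by rintro rfl; simp at hF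
  have hb₀ : a + 1 ≠ 0 := fun hb => hF (by linear_combination a * hb)
  rcases not_and_or.1 (fun hs : IsSquare a ∧ IsSquare (a + 1) => h ⟨⟨ha₀, hs.1⟩, hb₀, hs.2⟩)
    with hs | hs <;> simp [card_sqrts_of_not_isSquare hs]

variable (K) in
def hyperbola : Finset (K × K) := {q | q.2 ^ 2 = q.1 ^ 2 + 1}

theorem filter_hyperbola_fst_sq_eq (a : K) :
    {q ∈ hyperbola K | q.1 ^ 2 = a} = sqrts a ×ˢ sqrts (a + 1) := by
  ext ⟨x, y⟩
  simp only [hyperbola, sqrts, mem_filter, mem_univ, true_and, mem_product]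
  grind

theorem sum_hyperbola_comp_fst_sq {M : Type*} [AddCommMonoid M] (f : K → M) :
    ∑ q ∈ hyperbola K, f (q.1 ^ 2) = ∑ a, (#(sqrts a) * #(sqrts (a + 1))) • f a := by
  rw [← sum_fiberwise' (hyperbola K) (fun q => q.1 ^ 2) f]
  simp only [sum_const, filter_hyperbola_fst_sq_eq, card_product]

theorem hyperbolaParam_mem (h2 : (2 : K) ≠ 0) (t : Kˣ) : hyperbolaParam t ∈ hyperbola K := by
  have ht : (↑t⁻¹ : K) * t = 1 := t.inv_mul
  simp only [hyperbola, hyperbolaParam, mem_filter, mem_univ, true_and]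
  field_simp
  linear_combination 4 * ht

theorem sum_hyperbola {M : Type*} [AddCommMonoid M] (h2 : (2 : K) ≠ 0) (g : K × K → M) :
    ∑ q ∈ hyperbola K, g q = ∑ t : Kˣ, g (hyperbolaParam t) := by
  have factor {q : K × K} (hq : q ∈ hyperbola K) : (q.2 - q.1) * (q.2 + q.1) = 1 := by
    simp only [hyperbola, mem_filter, mem_univ, true_and] at hq
    linear_combination hq
  symm
  refine sum_bij' (fun t _ => hyperbolaParam t)
    (fun q hq => ⟨q.2 - q.1, q.2 + q.1, factor hq, by rw [mul_comm, factor hq]⟩)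
    (fun t _ => hyperbolaParam_mem h2 t) (fun _ _ => mem_univ _) ?_ ?_ (fun _ _ => rfl)
  · intro t _
    ext
    simp only [hyperbolaParam]
    field_simp
    ring
  · rintro ⟨x, y⟩ _
    simp only [hyperbolaParam, Units.inv_mk, Prod.mk.injEq]
    constructor <;> field_simp <;> ring

theorem sixteen_mul_sum_units_hyperbolaParam_fst (h2 : (2 : K) ≠ 0)
    (hq : ¬Fintype.card K - 1 ∣ 4) :
    16 * ∑ t : Kˣ, (((hyperbolaParam t).1 ^ 2) ^ 2 + (hyperbolaParam t).1 ^ 2) = 2 := by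
  have h4 : ∑ t : Kˣ, (t : K) ^ 4 = 0 := by rw [FiniteField.sum_pow_units, if_neg hq]
  have hinv : ∑ t : Kˣ, (↑t⁻¹ : K) ^ 4 = 0 := by
    rw [← h4]
    exact Fintype.sum_equiv (Equiv.inv Kˣ) _ _ fun _ => rfl
  have h1 : ∑ _t : Kˣ, (1 : K) = -1 := by simpa using FiniteField.sum_pow_units K 0
  rw [mul_sum, sum_congr rfl fun t _ => sixteen_mul_hyperbolaParam_fst h2 t, sum_sub_distrib,
    sum_add_distrib, hinv, h4, ← mul_one (2 : K), ← mul_sum, h1]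
  ring

theorem sum_sq_add_self_filter_consecutive_squares (hK : ringChar K ≠ 2)
    (hq : ¬Fintype.card K - 1 ∣ 4) :
    ∑ a ∈ univ.filter (fun a : K => (a ≠ 0 ∧ IsSquare a) ∧ (a + 1 ≠ 0 ∧ IsSquare (a + 1))),
      (a ^ 2 + a) = 32⁻¹ := by
  have h2 := Ring.two_ne_zero hK
  set S := ∑ a ∈ univ.filter (fun a : K => (a ≠ 0 ∧ IsSquare a) ∧ (a + 1 ≠ 0 ∧ IsSquare (a + 1))),
    (a ^ 2 + a)
  have h4S : 4 • S = ∑ t : Kˣ, (((hyperbolaParam t).1 ^ 2) ^ 2 + (hyperbolaParam t).1 ^ 2) := by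
    rw [← sum_hyperbola h2 fun q => (q.1 ^ 2) ^ 2 + q.1 ^ 2,
      sum_hyperbola_comp_fst_sq fun a => a ^ 2 + a, smul_sum, sum_filter]
    exact sum_congr rfl fun a _ => (card_sqrts_mul_card_sqrts_add_one_smul hK a).symm
  have h16 := sixteen_mul_sum_units_hyperbolaParam_fst h2 hq
  rw [← h4S, nsmul_eq_mul] at h16
  exact eq_inv_of_mul_eq_one_left <| mul_left_cancel₀ h2 <| by linear_combination h16

end FiniteField

open scoped Classical in
theorem sum_A00 (p : ℕ) [Fact p.Prime] (hp7 : 7 ≤ p) :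
    (∑ a ∈ Finset.univ.filter
        (fun a : ZMod p => (a ≠ 0 ∧ IsSquare a) ∧ (a + 1 ≠ 0 ∧ IsSquare (a + 1))),
        (a ^ 2 + a)) = (32 : ZMod p)⁻¹ := by
  convert sum_sq_add_self_filter_consecutive_squares (K := ZMod p) ?_ ?_
  · rw [ZMod.ringChar_zmod_n]
    omega
  · rw [ZMod.card]
    exact fun h => absurd (Nat.le_of_dvd (by norm_num) h) (by omega)
end

section
/- For a prime p ≥ 7, let A_{01} = {a ∈ Z/pZ : a is a nonzero quadratic residue and a+1 is a nonzero quadratic non-residue mod p}. Then ∑_{a ∈ A_{01}} (a^2 + a) ≡ −1/32 (mod p). -/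
/-!
With `h = (q - 1) / 2`, Euler's criterion turns the indicator of `a ∈ A₀₁` into
`(1 + a ^ h) (1 - (a + 1) ^ h) / 4` (the factor `a² + a` kills the cases `a = 0, -1`), so the sum
is `1/4` of the sum of a polynomial of degree `2h + 2` over the whole field. Power sums over `𝔽_q`
vanish in degrees below `2 (q - 1)` except in degree `q - 1`, where they equal `-1`. Hence only the
coefficient of `X ^ (2h)` survives; for `q ≥ 7` it comes from `X ^ (h + 1) (X + 1) ^ (h + 1)`
alone and equals `binom(h + 1, 2) = (h + 1) h / 2`, which is `-1/8` since `2h = -1`.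
-/

open Finset Polynomial

noncomputable def squareNonsquareWeight (R : Type*) [CommRing R] (h : ℕ) : R[X] :=
  X * (X + 1) * (1 + X ^ h) * (1 - (X + 1) ^ h)

section squareNonsquareWeight

variable {R : Type*} [CommRing R]

theorem eval_squareNonsquareWeight (h : ℕ) (a : R) :
    (squareNonsquareWeight R h).eval a = a * (a + 1) * (1 + a ^ h) * (1 - (a + 1) ^ h) := by
  simp only [squareNonsquareWeight, eval_mul, eval_add, eval_sub, eval_pow, eval_X, eval_one]

theorem natDegree_squareNonsquareWeight_le (h : ℕ) :
    (squareNonsquareWeight R h).natDegree ≤ 2 * h + 2 := by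
  unfold squareNonsquareWeight
  compute_degree
  omega

theorem coeff_squareNonsquareWeight {h : ℕ} (hh : 3 ≤ h) :
    (squareNonsquareWeight R h).coeff (2 * h) = -((h + 1).choose 2 : R) := by
  have hsplit : squareNonsquareWeight R h =
      (X * (X + 1) * (1 + X ^ h) - X * (X + 1) ^ (h + 1)) - X ^ (h + 1) * (X + 1) ^ (h + 1) := by
    unfold squareNonsquareWeight; ring
  have hlow : (X * (X + 1) * (1 + X ^ h) - X * (X + 1) ^ (h + 1) : R[X]).natDegree < 2 * h := by
    refine lt_of_le_of_lt (b := h + 2) ?_ (by omega)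
    compute_degree
    omega
  rw [hsplit, coeff_sub, coeff_eq_zero_of_natDegree_lt hlow, zero_sub, coeff_X_pow_mul',
    if_pos (by omega), coeff_X_add_one_pow, show 2 * h - (h + 1) = h - 1 by omega,
    Nat.choose_symm_of_eq_add (by omega : h + 1 = (h - 1) + 2)]

end squareNonsquareWeight

namespace FiniteField

variable {K : Type*} [Field K] [Fintype K]

theorem sum_pow_eq_sum_units [DecidableEq K] {i : ℕ} (hi : i ≠ 0) :
    ∑ x : K, x ^ i = ∑ x : Kˣ, (x ^ i : K) := by
  rw [← Fintype.sum_subtype_add_sum_subtype (· ≠ (0 : K)),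
    Fintype.sum_eq_zero (fun x : {x : K // ¬ x ≠ 0} => (x : K) ^ i)
      fun x => by rw [not_not.mp x.2, zero_pow hi],
    add_zero, ← Equiv.sum_comp unitsEquivNeZero]
  rfl

theorem sum_pow_of_lt_two_mul {i : ℕ} (hi : i < 2 * (Fintype.card K - 1)) :
    ∑ x : K, x ^ i = if i = Fintype.card K - 1 then -1 else 0 := by
  classical
  have hq : 0 < Fintype.card K - 1 := Nat.sub_pos_of_lt Fintype.one_lt_card
  rcases Nat.eq_zero_or_pos i with rfl | hpos
  · rw [if_neg hq.ne, sum_pow_lt_card_sub_one K 0 hq]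
  rw [sum_pow_eq_sum_units hpos.ne', sum_pow_units]
  refine if_congr ⟨?_, fun h => h ▸ dvd_rfl⟩ rfl rfl
  rintro ⟨k, rfl⟩
  rcases k with _ | _ | k <;> [omega; simp; nlinarith]

theorem sum_eval_eq_neg_coeff {P : K[X]} (hP : P.natDegree < 2 * (Fintype.card K - 1)) :
    ∑ x : K, P.eval x = -P.coeff (Fintype.card K - 1) := by
  simp_rw [eval_eq_sum_range' hP]
  rw [sum_comm]
  simp_rw [← mul_sum]
  rw [sum_congr rfl fun i hi => by rw [sum_pow_of_lt_two_mul (mem_range.mp hi)]]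
  simp_rw [mul_ite, mul_neg_one, mul_zero]
  rw [sum_ite_eq' _ _ (fun i => -P.coeff i), if_pos (mem_range.mpr (by omega))]

theorem pow_card_div_two_eq_neg_one (hK : ringChar K ≠ 2) {a : K} (ha : a ≠ 0)
    (hsq : ¬IsSquare a) : a ^ (Fintype.card K / 2) = -1 :=
  (pow_dichotomy hK ha).resolve_left (mt (isSquare_iff hK ha).mpr hsq)

theorem ite_square_nonsquare_eq_eval (hK : ringChar K ≠ 2) (a : K)
    [Decidable ((a ≠ 0 ∧ IsSquare a) ∧ (a + 1 ≠ 0 ∧ ¬IsSquare (a + 1)))] :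
    (if (a ≠ 0 ∧ IsSquare a) ∧ (a + 1 ≠ 0 ∧ ¬IsSquare (a + 1)) then a ^ 2 + a else 0) =
      (squareNonsquareWeight K (Fintype.card K / 2)).eval a / 4 := by
  have h4 : (4 : K) ≠ 0 := by
    simpa [show (4 : K) = 2 * 2 by norm_num] using Ring.two_ne_zero hK
  rw [eval_squareNonsquareWeight]
  by_cases ha : a = 0
  · simp [ha]
  by_cases hb : a + 1 = 0
  · simp [hb]
  by_cases hsa : IsSquare a
  · by_cases hsb : IsSquare (a + 1)
    · rw [if_neg fun h => h.2.2 hsb, (isSquare_iff hK hb).mp hsb]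
      ring
    · rw [if_pos ⟨⟨ha, hsa⟩, hb, hsb⟩, (isSquare_iff hK ha).mp hsa,
        pow_card_div_two_eq_neg_one hK hb hsb]
      field_simp
      ring
  · rw [if_neg fun h => hsa h.1.2, pow_card_div_two_eq_neg_one hK ha hsa]
    ring

theorem sum_sq_add_self_filter_square_succ_nonsquare (hK : ringChar K ≠ 2)
    (hq : 7 ≤ Fintype.card K)
    [DecidablePred fun a : K => (a ≠ 0 ∧ IsSquare a) ∧ (a + 1 ≠ 0 ∧ ¬IsSquare (a + 1))] :
    (∑ a ∈ univ.filter
        (fun a : K => (a ≠ 0 ∧ IsSquare a) ∧ (a + 1 ≠ 0 ∧ ¬ IsSquare (a + 1))),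
        (a ^ 2 + a)) = -(32 : K)⁻¹ := by
  set h := Fintype.card K / 2
  have hcard : Fintype.card K = 2 * h + 1 := by have := odd_card_of_char_ne_two hK; omega
  have hh : (2 * h + 1 : K) = 0 := by exact_mod_cast hcard ▸ cast_card_eq_zero K
  have : NeZero (2 : K) := ⟨Ring.two_ne_zero hK⟩
  have hdeg : (squareNonsquareWeight K h).natDegree < 2 * (Fintype.card K - 1) :=
    (natDegree_squareNonsquareWeight_le h).trans_lt (by omega)
  rw [sum_filter]
  simp_rw [ite_square_nonsquare_eq_eval hK]
  rw [← sum_div, sum_eval_eq_neg_coeff hdeg, show Fintype.card K - 1 = 2 * h by omega,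
    coeff_squareNonsquareWeight (by omega), neg_neg, Nat.cast_choose_two]
  have h4 : (4 : K) ≠ 0 := by
    simpa [show (4 : K) = 2 * 2 by norm_num] using Ring.two_ne_zero hK
  have h32 : (32 : K) ≠ 0 := by
    simpa [show (32 : K) = 2 ^ 5 by norm_num] using Ring.two_ne_zero hK
  push_cast
  field_simp
  linear_combination 8 * (2 * h + 1 : K) * hh

end FiniteField

open scoped Classical in
theorem sum_A01 (p : ℕ) [Fact p.Prime] (hp7 : 7 ≤ p) :
    (∑ a ∈ Finset.univ.filter
        (fun a : ZMod p => (a ≠ 0 ∧ IsSquare a) ∧ (a + 1 ≠ 0 ∧ ¬ IsSquare (a + 1))),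
        (a ^ 2 + a)) = -(32 : ZMod p)⁻¹ :=
  FiniteField.sum_sq_add_self_filter_square_succ_nonsquare (K := ZMod p)
    (by rw [ZMod.ringChar_zmod_n]; omega) (by rwa [ZMod.card])
end

section
/- For a prime p ≥ 7, let A_{10} = {a ∈ Z/pZ : a is a nonzero quadratic non-residue and a+1 is a nonzero quadratic residue mod p}, and A_{11} = {a ∈ Z/pZ : a is a nonzero quadratic non-residue and a+1 is a nonzero quadratic non-residue mod p}. Then ∑_{a ∈ A_{10}} (a^2 + a) ≡ −1/32 (mod p) and ∑_{a ∈ A_{11}} (a^2 + a) ≡ 1/32 (mod p). -/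
/-!
By Euler's criterion, for `a ≠ 0` the power `a ^ (p / 2)` is `1` or `-1` according as `a` is a
residue or not. Since the weight `a ^ 2 + a` vanishes at `0` and `-1`, four times each sum is
`∑ (a ^ 2 + a) (1 - a ^ (p / 2)) (1 ± (a + 1) ^ (p / 2))` over all of `ZMod p`. Expanding, every
term is a power sum `∑ x ^ i` with `i ≤ p + 1`, which is `-1` when `p - 1 ∣ i`, `i > 0`, and `0`
otherwise. Only `∓ (a (a + 1)) ^ (p / 2 + 1)` survives, with sum `-C(p / 2 + 1, 2) = 1 / 8`.
-/

open Finset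

namespace FiniteField
variable {K : Type*} [Field K] [Fintype K]

theorem sum_pow_of_pos [DecidableEq K] {i : ℕ} (hi : 0 < i) :
    ∑ x : K, x ^ i = if Fintype.card K - 1 ∣ i then -1 else 0 := by
  rw [← sum_pow_units, Fintype.sum_eq_add_sum_compl (0 : K), zero_pow hi.ne', zero_add,
    Finset.sum_subtype _ (p := (· ≠ 0)) (by simp)]
  exact (Fintype.sum_equiv unitsEquivNeZero _ _ fun _ => rfl).symm

theorem sum_pow_mul_add_eq_zero {n : ℕ} (hn : n + 1 < Fintype.card K - 1) (c : K) :
    ∑ x : K, x ^ n * (x + c) = 0 := by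
  simp only [mul_add, ← pow_succ, sum_add_distrib, ← sum_mul,
    sum_pow_lt_card_sub_one K _ hn, sum_pow_lt_card_sub_one K n (by omega), zero_mul, add_zero]

theorem sum_mul_add_one_pow {n : ℕ} (h₁ : n < Fintype.card K - 1)
    (h₂ : Fintype.card K - 1 ≤ 2 * n) :
    ∑ x : K, (x * (x + 1)) ^ n = -(n.choose (Fintype.card K - 1 - n) : K) := by
  classical
  have expand (x : K) :
      (x * (x + 1)) ^ n = ∑ k ∈ range (n + 1), x ^ (n + k) * (n.choose k : K) := by
    simp only [mul_pow, add_pow, one_pow, mul_one, mul_sum, pow_add, mul_assoc]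
  have dvd_iff {k : ℕ} (hk : k ∈ range (n + 1)) :
      Fintype.card K - 1 ∣ n + k ↔ k = Fintype.card K - 1 - n := by
    rw [mem_range] at hk
    refine ⟨fun h => ?_, fun h => ⟨1, by omega⟩⟩
    have := Nat.eq_of_dvd_of_lt_two_mul (by omega) h (by omega)
    omega
  simp only [expand]
  rw [sum_comm]
  simp only [← sum_mul, sum_pow_of_pos (Nat.lt_add_right _ (show 0 < n by omega))]
  rw [sum_eq_single_of_mem (Fintype.card K - 1 - n) (mem_range.2 (by omega))]
  · simp [dvd_iff (mem_range.2 (show Fintype.card K - 1 - n < n + 1 by omega))]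
  · intro k hk hne
    simp [(dvd_iff hk).not.2 hne]

end FiniteField

namespace ZMod

theorem eight_mul_choose_div_two_add_one_two {p : ℕ} (hp : Odd p) :
    8 * ((p / 2 + 1).choose 2 : ZMod p) = -1 := by
  have hm : 2 * ((p / 2 : ℕ) : ZMod p) + 1 = 0 := by
    exact_mod_cast (congrArg (Nat.cast : ℕ → ZMod p) (Nat.two_mul_div_two_add_one_of_odd hp)).trans
      (natCast_self p)
  have hchoose := congrArg (Nat.cast : ℕ → ZMod p) (Nat.add_one_mul_choose_eq (p / 2) 1)
  push_cast [Nat.choose_one_right] at hchoose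
  linear_combination (-4) * hchoose + (2 * ((p / 2 : ℕ) : ZMod p) + 1) * hm

variable {p : ℕ} [Fact p.Prime]

theorem pow_div_two_eq_ite {a : ZMod p} (ha : a ≠ 0) :
    a ^ (p / 2) = if IsSquare a then 1 else -1 := by
  split_ifs with h
  · exact (euler_criterion p ha).1 h
  · exact (pow_div_two_eq_neg_one_or_one p ha).resolve_left (mt (euler_criterion p ha).2 h)

theorem eight_mul_sum_mul_add_one_pow_div_two_add_one (hp : 3 < p) :
    8 * ∑ a : ZMod p, (a * (a + 1)) ^ (p / 2 + 1) = 1 := by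
  have hodd : Odd p := (Fact.out : p.Prime).odd_of_ne_two (by omega)
  have hp2 := Nat.odd_iff.1 hodd
  rw [FiniteField.sum_mul_add_one_pow (by rw [card]; omega) (by rw [card]; omega), card,
    Nat.choose_symm_of_eq_add (show p / 2 + 1 = p - 1 - (p / 2 + 1) + 2 by omega)]
  linear_combination -eight_mul_choose_div_two_add_one_two hodd

theorem eight_mul_sum_mul_one_sub_pow_div_two (hp : 5 < p) (ε : ZMod p) :
    8 * ∑ a : ZMod p, (a ^ 2 + a) * (1 - a ^ (p / 2)) * (1 + ε * (a + 1) ^ (p / 2)) = -ε := by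
  have hp2 := Nat.odd_iff.1 ((Fact.out : p.Prime).odd_of_ne_two (by omega))
  have expand (a : ZMod p) : (a ^ 2 + a) * (1 - a ^ (p / 2)) * (1 + ε * (a + 1) ^ (p / 2)) =
      a ^ 1 * (a + 1) - a ^ (p / 2 + 1) * (a + 1) + ε * ((a + 1) ^ (p / 2 + 1) * ((a + 1) + -1))
        - ε * (a * (a + 1)) ^ (p / 2 + 1) := by
    rw [mul_pow]
    ring
  have shift : ∑ a : ZMod p, (a + 1) ^ (p / 2 + 1) * ((a + 1) + -1) = 0 :=
    (Equiv.sum_comp (Equiv.addRight 1) fun b => b ^ (p / 2 + 1) * (b + -1)).trans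
      (FiniteField.sum_pow_mul_add_eq_zero (by rw [card]; omega) _)
  simp only [expand, sum_sub_distrib, sum_add_distrib, ← mul_sum, shift,
    FiniteField.sum_pow_mul_add_eq_zero (K := ZMod p) (n := 1) (by rw [card]; omega),
    FiniteField.sum_pow_mul_add_eq_zero (K := ZMod p) (n := p / 2 + 1) (by rw [card]; omega)]
  linear_combination (-ε) * eight_mul_sum_mul_add_one_pow_div_two_add_one (p := p) (by omega)

open scoped Classical in
theorem four_mul_sum_filter_nonsquare_square :
    4 * ∑ a ∈ univ.filter
        (fun a : ZMod p => (a ≠ 0 ∧ ¬ IsSquare a) ∧ (a + 1 ≠ 0 ∧ IsSquare (a + 1))), (a ^ 2 + a) =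
      ∑ a : ZMod p, (a ^ 2 + a) * (1 - a ^ (p / 2)) * (1 + (a + 1) ^ (p / 2)) := by
  rw [mul_sum, sum_filter]
  refine sum_congr rfl fun a _ => ?_
  rcases eq_or_ne a 0 with rfl | ha
  · simp
  rcases eq_or_ne (a + 1) 0 with hb | hb
  · simp [hb, show a ^ 2 + a = 0 by linear_combination a * hb]
  rw [pow_div_two_eq_ite ha, pow_div_two_eq_ite hb]
  by_cases IsSquare a <;> by_cases IsSquare (a + 1) <;> simp [*]
  ring

open scoped Classical in
theorem four_mul_sum_filter_nonsquare_nonsquare :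
    4 * ∑ a ∈ univ.filter
        (fun a : ZMod p => (a ≠ 0 ∧ ¬ IsSquare a) ∧ (a + 1 ≠ 0 ∧ ¬ IsSquare (a + 1))), (a ^ 2 + a) =
      ∑ a : ZMod p, (a ^ 2 + a) * (1 - a ^ (p / 2)) * (1 - (a + 1) ^ (p / 2)) := by
  rw [mul_sum, sum_filter]
  refine sum_congr rfl fun a _ => ?_
  rcases eq_or_ne a 0 with rfl | ha
  · simp
  rcases eq_or_ne (a + 1) 0 with hb | hb
  · simp [hb, show a ^ 2 + a = 0 by linear_combination a * hb]
  rw [pow_div_two_eq_ite ha, pow_div_two_eq_ite hb]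
  by_cases IsSquare a <;> by_cases IsSquare (a + 1) <;> simp [*]
  ring

end ZMod

open scoped Classical in
theorem sum_A10_A11 (p : ℕ) [Fact p.Prime] (hp7 : 7 ≤ p) :
    (∑ a ∈ Finset.univ.filter
        (fun a : ZMod p => (a ≠ 0 ∧ ¬ IsSquare a) ∧ (a + 1 ≠ 0 ∧ IsSquare (a + 1))),
        (a ^ 2 + a)) = -(32 : ZMod p)⁻¹ ∧
    (∑ a ∈ Finset.univ.filter
        (fun a : ZMod p => (a ≠ 0 ∧ ¬ IsSquare a) ∧ (a + 1 ≠ 0 ∧ ¬ IsSquare (a + 1))),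
        (a ^ 2 + a)) = (32 : ZMod p)⁻¹ := by
  have h10 := ZMod.eight_mul_sum_mul_one_sub_pow_div_two (p := p) (by omega) 1
  have h11 := ZMod.eight_mul_sum_mul_one_sub_pow_div_two (p := p) (by omega) (-1)
  simp only [one_mul, neg_one_mul, ← sub_eq_add_neg, neg_neg] at h10 h11
  rw [← ZMod.four_mul_sum_filter_nonsquare_square] at h10
  rw [← ZMod.four_mul_sum_filter_nonsquare_nonsquare] at h11
  constructor
  · exact neg_eq_iff_eq_neg.mp (eq_inv_of_mul_eq_one_right (by linear_combination -h10))
  · exact eq_inv_of_mul_eq_one_right (by linear_combination h11)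
end

section
/- Let p be a prime with p ≡ 1 (mod 8). For any integers c, e with p ∤ c and c a quadratic residue mod p, the sum of the distinct values of x^4 + cx^2 + e modulo p, as x ranges over Z/pZ, is congruent to −(9/64)c^2 + (5/8)e (mod p). -/
/-!
Write `x ^ 4 + c x ^ 2 + e = g (x ^ 2)` with `g t = t ^ 2 + c t + e`, so the values are those of
`g` on the squares. As `g t' = g t` exactly when `t' = t` or `t' = -c - t`, the sum of the distinct
values is `∑_{t square} g t` minus half of `∑ g t` over the squares `t ≠ -c / 2` whose partner
`-c - t` is a square too; the midpoint `-c / 2` itself is such a square because `-1`, `2` and `c`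
are squares when `q ≡ 1 (mod 8)`.

By Euler's criterion `2 [t is a square] = 1 + t ^ (q / 2)` for `t ≠ 0`, which turns both sums
into power sums `∑ t ^ k`; these vanish unless `q - 1 ∣ k`. The only surviving term is
`∑ (t (-c - t)) ^ (q / 2) g t`, evaluated by completing the square and the binomial theorem.
-/

open Finset Function

theorem Finset.sum_image_eq_sub_half_of_involutive {α M : Type*} [DecidableEq α] [Field M]
    [DecidableEq M] (h2 : (2 : M) ≠ 0) {g : α → M} {σ : α → α} (hσ : Involutive σ)
    (hg : ∀ a b, g b = g a ↔ b = a ∨ b = σ a) (s : Finset α) :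
    ∑ v ∈ s.image g, v = ∑ a ∈ s, g a - (∑ a ∈ s with σ a ∈ s ∧ σ a ≠ a, g a) / 2 := by
  rw [sum_filter, sum_div, ← sum_sub_distrib]
  refine sum_image' _ fun a ha => ?_
  simp only [hg]
  by_cases hpair : σ a ∈ s ∧ σ a ≠ a
  · have hfiber : {b ∈ s | b = a ∨ b = σ a} = {a, σ a} := by
      ext b; simp only [mem_filter, mem_insert, mem_singleton]
      constructor
      · exact fun h => h.2
      · rintro (rfl | rfl) <;> simp_all
    have hgσ : g (σ a) = g a := (hg a (σ a)).2 (Or.inr rfl)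
    rw [hfiber, sum_pair hpair.2.symm, if_pos hpair, hσ a, if_pos ⟨ha, hpair.2.symm⟩, hgσ]
    field_simp
    ring
  · have hfiber : {b ∈ s | b = a ∨ b = σ a} = {a} := by
      ext b; simp only [mem_filter, mem_singleton]
      constructor
      · rintro ⟨hb, rfl | rfl⟩
        · rfl
        · by_contra hne; exact hpair ⟨hb, hne⟩
      · rintro rfl; exact ⟨ha, Or.inl rfl⟩
    rw [hfiber, sum_singleton, if_neg hpair, zero_div, sub_zero]

theorem sq_add_mul_eq_sq_add_mul_iff {R : Type*} [CommRing R] [NoZeroDivisors R] {a b c : R} :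
    b ^ 2 + c * b = a ^ 2 + c * a ↔ b = a ∨ b = -c - a := by
  rw [← sub_eq_zero, ← sub_eq_zero (a := b), ← sub_eq_zero (a := b) (b := -c - a), ← mul_eq_zero]
  constructor <;> intro h <;> linear_combination h

theorem univ_image_sq_eq_filter_isSquare {M : Type*} [Monoid M] [Fintype M] [DecidableEq M] :
    univ.image (fun x : M => x ^ 2) = univ.filter IsSquare := by
  ext t
  simp [IsSquare, sq, eq_comm]

namespace FiniteField

variable {F : Type*} [Field F] [Fintype F]

local notation "q" => Fintype.card F

theorem ringChar_ne_two_of_card_mod_two (hq : q % 2 = 1) : ringChar F ≠ 2 :=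
  mt even_card_iff_char_two.mp (by omega)

theorem sum_pow_card_sub_one_eq_neg_one : ∑ x : F, x ^ (q - 1) = -1 := by
  classical
  have hx : ∀ x : F, x ^ (q - 1) = 1 - if x = 0 then 1 else 0 := fun x => by
    split_ifs with h
    · rw [h, zero_pow (by have := Fintype.one_lt_card (α := F); omega), sub_self]
    · rw [pow_card_sub_one_eq_one x h, sub_zero]
  simp [hx, sum_sub_distrib]

theorem sum_pow_two_mul (hq : q % 2 = 1) (h3 : 3 < q) {j : ℕ} (hj : j ≤ q / 2 + 1) :
    ∑ x : F, x ^ (2 * j) = if j = q / 2 then -1 else 0 := by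
  split_ifs with hjm
  · rw [hjm, show 2 * (q / 2) = q - 1 by omega]
    exact sum_pow_card_sub_one_eq_neg_one
  · obtain hlt | rfl : j < q / 2 ∨ j = q / 2 + 1 := by omega
    · exact sum_pow_lt_card_sub_one _ _ (by omega)
    · have hx : ∀ x : F, x ^ (2 * (q / 2 + 1)) = x ^ 2 := fun x => by
        rw [show 2 * (q / 2 + 1) = q + 1 by omega, pow_succ, pow_card, sq]
      simp only [hx]
      exact sum_pow_lt_card_sub_one _ _ (by omega)

theorem sum_sq_sub_pow (hq : q % 2 = 1) (h3 : 3 < q) (d : F) {k : ℕ} (hk : k ≤ q / 2 + 1) :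
    ∑ x : F, (x ^ 2 - d) ^ k = -(k.choose (q / 2) * (-d) ^ (k - q / 2)) := by
  have hexpand : ∀ x : F, (x ^ 2 - d) ^ k =
      ∑ j ∈ range (k + 1), x ^ (2 * j) * ((-d) ^ (k - j) * k.choose j) := fun x => by
    rw [sub_eq_add_neg, add_pow]
    exact sum_congr rfl fun j _ => by rw [pow_mul]; ring
  calc ∑ x : F, (x ^ 2 - d) ^ k
      = ∑ j ∈ range (k + 1), (∑ x : F, x ^ (2 * j)) * ((-d) ^ (k - j) * k.choose j) := by
        simp only [hexpand, sum_mul]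
        exact sum_comm
    _ = ∑ j ∈ range (k + 1), if j = q / 2 then -((-d) ^ (k - j) * k.choose j) else 0 := by
        refine sum_congr rfl fun j hj => ?_
        rw [sum_pow_two_mul hq h3 (by simp at hj; omega)]
        split_ifs <;> ring
    _ = -(k.choose (q / 2) * (-d) ^ (k - q / 2)) := by
        rw [sum_ite_eq']
        split_ifs with hm
        · ring
        · rw [Nat.choose_eq_zero_of_lt (by simp at hm; omega)]
          simp

theorem sum_sq_add_mul_pow (hq : q % 2 = 1) (h3 : 3 < q) (b : F) {k : ℕ}
    (hk : k ≤ q / 2 + 1) :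
    ∑ x : F, (x ^ 2 + b * x) ^ k = -(k.choose (q / 2) * (-(b ^ 2 / 4)) ^ (k - q / 2)) := by
  have h2 : (2 : F) ≠ 0 := Ring.two_ne_zero (ringChar_ne_two_of_card_mod_two hq)
  rw [← sum_sq_sub_pow hq h3 _ hk]
  refine Fintype.sum_equiv (Equiv.addRight (b / 2)) _ _ fun x => ?_
  -- `field_simp` only knows `2 ≠ 0`, so other constants are spelled as powers of `2`.
  simp only [Equiv.coe_addRight, show (4 : F) = 2 ^ 2 by norm_num]
  congr 1
  field_simp
  ring

theorem sum_pow_mul_quadratic {k : ℕ} (hk : k + 2 < q - 1) (b e : F) :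
    ∑ t : F, t ^ k * (t ^ 2 + b * t + e) = 0 := by
  have ht : ∀ t : F, t ^ k * (t ^ 2 + b * t + e) = t ^ (k + 2) + b * t ^ (k + 1) + e * t ^ k :=
    fun t => by ring
  rw [sum_congr rfl fun t _ => ht t, sum_add_distrib, sum_add_distrib, ← mul_sum, ← mul_sum,
    sum_pow_lt_card_sub_one F _ hk, sum_pow_lt_card_sub_one F (k + 1) (by omega),
    sum_pow_lt_card_sub_one F k (by omega)]
  ring

theorem sum_pow_half_mul_pow_half_mul_quadratic (hq : q % 4 = 1) (b e : F) :
    ∑ t : F, t ^ (q / 2) * (-b - t) ^ (q / 2) * (t ^ 2 + b * t + e) = b ^ 2 / 8 - e := by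
  have hq2 : q % 2 = 1 := by omega
  have h3 : 3 < q := by have := Fintype.one_lt_card (α := F); omega
  have h2 : (2 : F) ≠ 0 := Ring.two_ne_zero (ringChar_ne_two_of_card_mod_two hq2)
  have heven : Even (q / 2) := Nat.even_iff.mpr (by omega)
  have ht : ∀ t : F, t ^ (q / 2) * (-b - t) ^ (q / 2) * (t ^ 2 + b * t + e) =
      (t ^ 2 + b * t) ^ (q / 2 + 1) + e * (t ^ 2 + b * t) ^ (q / 2) := fun t => by
    rw [← mul_pow, show t * (-b - t) = -(t ^ 2 + b * t) by ring, heven.neg_pow, pow_succ]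
    ring
  have hhalf : ((q / 2 + 1 : ℕ) : F) * 2 = 1 := by
    have : ((q / 2 + 1 : ℕ) : F) * 2 = ((q + 1 : ℕ) : F) := by
      rw [show q + 1 = (q / 2 + 1) * 2 by omega]; push_cast; ring
    rw [this, Nat.cast_succ, cast_card_eq_zero, zero_add]
  simp only [ht, sum_add_distrib, ← mul_sum, sum_sq_add_mul_pow hq2 h3 b le_rfl,
    sum_sq_add_mul_pow hq2 h3 b (Nat.le_succ _), Nat.choose_succ_self_right, Nat.choose_self,
    Nat.add_sub_cancel_left, Nat.sub_self, pow_zero, pow_one]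
  rw [eq_inv_of_mul_eq_one_left hhalf, show (4 : F) = 2 ^ 2 by norm_num,
    show (8 : F) = 2 ^ 3 by norm_num]
  field_simp
  ring

variable [DecidableEq F]

theorem pow_card_div_two_eq_ite (hF : ringChar F ≠ 2) {t : F} (ht : t ≠ 0) :
    t ^ (q / 2) = if IsSquare t then 1 else -1 := by
  split_ifs with h
  · exact (isSquare_iff hF ht).mp h
  · exact (pow_dichotomy hF ht).resolve_left (mt (isSquare_iff hF ht).mpr h)

theorem sum_filter_isSquare_quadratic (hq : q % 2 = 1) (h5 : 5 < q) (b e : F) :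
    ∑ t ∈ univ with IsSquare t, (t ^ 2 + b * t + e) = e / 2 := by
  have hF := ringChar_ne_two_of_card_mod_two hq
  have hpt : ∀ t : F, (if IsSquare t then t ^ 2 + b * t + e else 0) * 2 =
      t ^ 0 * (t ^ 2 + b * t + e) + t ^ (q / 2) * (t ^ 2 + b * t + e) +
        if t = 0 then e else 0 := fun t => by
    rcases eq_or_ne t 0 with rfl | ht
    · rw [if_pos IsSquare.zero, if_pos rfl, zero_pow (show q / 2 ≠ 0 by omega)]
      ring
    · rw [pow_card_div_two_eq_ite hF ht, if_neg ht]
      split_ifs <;> ring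
  rw [sum_filter, eq_div_iff (Ring.two_ne_zero hF), sum_mul, sum_congr rfl fun t _ => hpt t,
    sum_add_distrib, sum_add_distrib, sum_pow_mul_quadratic (by omega),
    sum_pow_mul_quadratic (by omega), sum_ite_eq' univ (0 : F), if_pos (mem_univ _)]
  ring

theorem sum_filter_isSquare_and_isSquare_neg_sub_quadratic (hq : q % 4 = 1) (h5 : 5 < q)
    {b : F} (hb0 : b ≠ 0) (hb : IsSquare (-b)) (e : F) :
    ∑ t ∈ univ with IsSquare t ∧ IsSquare (-b - t), (t ^ 2 + b * t + e) =
      b ^ 2 / 32 + 3 * e / 4 := by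
  have hF := ringChar_ne_two_of_card_mod_two (show q % 2 = 1 by omega)
  have hb' : (-b) ^ (q / 2) = 1 := by
    rw [pow_card_div_two_eq_ite hF (neg_ne_zero.mpr hb0), if_pos hb]
  have hpt : ∀ t : F, (if IsSquare t ∧ IsSquare (-b - t) then t ^ 2 + b * t + e else 0) * 4 =
      t ^ 0 * (t ^ 2 + b * t + e) + t ^ (q / 2) * (t ^ 2 + b * t + e) +
        (-b - t) ^ (q / 2) * (t ^ 2 + b * t + e) +
        t ^ (q / 2) * (-b - t) ^ (q / 2) * (t ^ 2 + b * t + e) +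
        (if t = 0 then 2 * e else 0) + (if t = -b then 2 * e else 0) := fun t => by
    have hm : q / 2 ≠ 0 := by omega
    rcases eq_or_ne t 0 with rfl | ht
    · rw [if_pos ⟨IsSquare.zero, by rwa [sub_zero]⟩, if_pos rfl,
        if_neg (neg_ne_zero.mpr hb0).symm, sub_zero, hb', zero_pow hm]
      ring
    rcases eq_or_ne t (-b) with rfl | htb
    · rw [if_pos ⟨hb, by rw [sub_self]; exact IsSquare.zero⟩, if_neg ht, if_pos rfl, sub_self,
        hb', zero_pow hm]
      ring
    have hσt : -b - t ≠ 0 := fun h => htb (by linear_combination -h)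
    rw [pow_card_div_two_eq_ite hF ht, pow_card_div_two_eq_ite hF hσt, if_neg ht, if_neg htb]
    by_cases hs : IsSquare t <;> by_cases hs' : IsSquare (-b - t) <;>
      simp only [hs, hs', and_self, and_false, false_and, if_true, if_false] <;> ring
  have hreflect : ∑ t : F, (-b - t) ^ (q / 2) * (t ^ 2 + b * t + e) =
      ∑ t : F, t ^ (q / 2) * (t ^ 2 + b * t + e) :=
    Fintype.sum_equiv (Equiv.subLeft (-b)) _ _ fun t => by simp only [Equiv.subLeft_apply]; ring
  have h2 : (2 : F) ≠ 0 := Ring.two_ne_zero hF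
  rw [sum_filter, ← mul_left_inj' (show (2 : F) ^ 2 ≠ 0 from pow_ne_zero 2 h2), sum_mul,
    show (2 : F) ^ 2 = 4 by norm_num, sum_congr rfl fun t _ => hpt t]
  simp only [sum_add_distrib, hreflect, sum_pow_mul_quadratic (by omega : 0 + 2 < q - 1),
    sum_pow_mul_quadratic (by omega : q / 2 + 2 < q - 1),
    sum_pow_half_mul_pow_half_mul_quadratic hq, sum_ite_eq' univ, mem_univ, if_true]
  rw [show (4 : F) = 2 ^ 2 by norm_num, show (8 : F) = 2 ^ 3 by norm_num,
    show (32 : F) = 2 ^ 5 by norm_num]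
  field_simp
  ring

theorem sum_image_quartic (hq : q % 8 = 1) {c : F} (hc0 : c ≠ 0) (hc : IsSquare c) (e : F) :
    ∑ v ∈ univ.image (fun x : F => x ^ 4 + c * x ^ 2 + e), v =
      -(9 / 64 : F) * c ^ 2 + (5 / 8 : F) * e := by
  have hq9 : 8 < q := by have := Fintype.one_lt_card (α := F); omega
  have h2 : (2 : F) ≠ 0 := Ring.two_ne_zero (ringChar_ne_two_of_card_mod_two (by omega))
  have hnegc : IsSquare (-c) := by
    simpa using (isSquare_neg_one_iff.mpr (by omega)).mul hc
  have hmid : IsSquare (-c / 2) := hnegc.div (isSquare_two_iff.mpr ⟨by omega, by omega⟩)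
  have hσ : Involutive (fun t : F => -c - t) := fun t => by ring
  have hg : ∀ a b : F, b ^ 2 + c * b + e = a ^ 2 + c * a + e ↔ b = a ∨ b = -c - a :=
    fun a b => by rw [add_left_inj, sq_add_mul_eq_sq_add_mul_iff]
  have himage : univ.image (fun x : F => x ^ 4 + c * x ^ 2 + e) =
      (univ.filter IsSquare).image (fun t => t ^ 2 + c * t + e) := by
    rw [← univ_image_sq_eq_filter_isSquare, image_image]
    congr 1
    funext x
    simp only [comp_apply]
    ring
  have hpairs :
      {t ∈ univ.filter (IsSquare : F → Prop) | -c - t ∈ univ.filter IsSquare ∧ -c - t ≠ t} =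
      (univ.filter fun t => IsSquare t ∧ IsSquare (-c - t)).erase (-c / 2) := by
    ext t
    have hfix : -c - t ≠ t ↔ t ≠ -c / 2 := by
      rw [ne_eq, ne_eq, eq_div_iff h2, not_iff_not]
      constructor <;> intro h <;> linear_combination -h
    simp only [mem_filter, mem_erase, mem_univ, true_and, hfix]
    tauto
  have hmem : -c / 2 ∈ univ.filter fun t => IsSquare t ∧ IsSquare (-c - t) := by
    simpa [show -c - -c / 2 = -c / 2 by field_simp; ring] using hmid
  rw [himage, sum_image_eq_sub_half_of_involutive h2 hσ hg, hpairs, sum_erase_eq_sub hmem,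
    sum_filter_isSquare_quadratic (by omega) (by omega),
    sum_filter_isSquare_and_isSquare_neg_sub_quadratic (by omega) (by omega) hc0 hnegc]
  rw [show (4 : F) = 2 ^ 2 by norm_num, show (8 : F) = 2 ^ 3 by norm_num,
    show (32 : F) = 2 ^ 5 by norm_num, show (64 : F) = 2 ^ 6 by norm_num]
  field_simp
  ring

end FiniteField

theorem sum_residues_one_mod_eight (p : ℕ) [Fact p.Prime] (hp : p % 8 = 1)
    (c e : ℤ) (hc : ¬ (p : ℤ) ∣ c) (hcQR : IsSquare (c : ZMod p)) :
    ((Finset.univ.image (fun x : ZMod p =>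
        x ^ 4 + (c : ZMod p) * x ^ 2 + (e : ZMod p))).sum id) =
      -(9 / 64 : ZMod p) * (c : ZMod p) ^ 2 + (5 / 8 : ZMod p) * (e : ZMod p) := by
  have hc0 : (c : ZMod p) ≠ 0 := by rwa [Ne, ZMod.intCast_zmod_eq_zero_iff_dvd]
  exact FiniteField.sum_image_quartic (by rwa [ZMod.card]) hc0 hcQR e
end

section
/- Let p be a prime with p ≡ 7 (mod 8). For any integers c, e with p ∤ c: if c is a quadratic residue mod p, the sum of the distinct values of x^4 + cx^2 + e modulo p equals (1/64)c^2 + (3/8)e (mod p); if c is a quadratic non-residue, the sum equals −(7/64)c^2 + (3/8)e (mod p). -/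
set_option linter.unusedSectionVars false

open Finset

namespace SRSAux

variable {p : ℕ} [Fact p.Prime]

lemma pge (hp : p % 8 = 7) : 7 ≤ p := by
  have := Nat.mod_le p 8; omega

lemma sum_pow (hp : p % 8 = 7) (j : ℕ) (hj : j < 2 * (p - 1)) :
    ∑ x : ZMod p, x ^ j = if j = p - 1 then -1 else 0 := by
  have h7 := pge hp
  have hcard : Fintype.card (ZMod p) = p := ZMod.card p
  have hgen : ∀ i : ℕ, 0 < i → i < p - 1 → ∑ x : ZMod p, x ^ i = 0 := by
    intro i _ hi
    exact FiniteField.sum_pow_lt_card_sub_one (K := ZMod p) i (by rw [hcard]; exact hi)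
  rcases Nat.eq_zero_or_pos j with rfl | hj0
  · rw [if_neg (by omega)]
    simp only [pow_zero]
    rw [Finset.sum_const, Finset.card_univ, hcard, nsmul_eq_mul, mul_one, ZMod.natCast_self]
  rcases lt_trichotomy j (p - 1) with h | rfl | h
  · rw [if_neg (by omega)]; exact hgen j hj0 h
  · rw [if_pos rfl]
    have step : ∀ x : ZMod p, x ^ (p - 1) = 1 - (if x = 0 then 1 else 0) := by
      intro x
      by_cases hx : x = 0
      · simp [hx, zero_pow (show p - 1 ≠ 0 by omega)]
      · simp [hx, ZMod.pow_card_sub_one_eq_one hx]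
    simp_rw [step]
    rw [Finset.sum_sub_distrib, Finset.sum_const, Finset.card_univ, hcard, nsmul_eq_mul, mul_one,
      ZMod.natCast_self, Finset.sum_ite_eq' Finset.univ (0 : ZMod p) (fun _ => (1 : ZMod p))]
    simp
  · rw [if_neg (by omega)]
    have step : ∀ x : ZMod p, x ^ j = x ^ (j - (p - 1)) := by
      intro x
      by_cases hx : x = 0
      · subst hx
        rw [zero_pow (show j ≠ 0 by omega), zero_pow (show j - (p-1) ≠ 0 by omega)]
      · conv_lhs => rw [show j = (p - 1) + (j - (p - 1)) by omega]
        rw [pow_add, ZMod.pow_card_sub_one_eq_one hx, one_mul]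
    simp_rw [step]
    exact hgen _ (by omega) (by omega)


lemma binom_sum (hp : p % 8 = 7) (c : ZMod p) (r : ℕ) (hr : r ≤ 2) :
    ∑ x : ZMod p, x ^ (2 * r) * (x ^ 2 + c) ^ (p / 2)
      = -(((p / 2).choose r : ZMod p) * c ^ r) := by
  have h7 := pge hp
  set m := p / 2 with hm
  have hm2 : 2 * m = p - 1 := by omega
  have hm3 : 3 ≤ m := by omega
  have expand : ∀ x : ZMod p, x ^ (2 * r) * (x ^ 2 + c) ^ m
      = ∑ k ∈ Finset.range (m + 1), x ^ (2 * r + 2 * k) * (c ^ (m - k) * (m.choose k : ZMod p)) := by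
    intro x
    rw [add_pow, Finset.mul_sum]
    apply Finset.sum_congr rfl
    intro k _
    ring
  simp_rw [expand]
  rw [Finset.sum_comm]
  have inner : ∀ k ∈ Finset.range (m + 1),
      (∑ x : ZMod p, x ^ (2 * r + 2 * k) * (c ^ (m - k) * (m.choose k : ZMod p)))
      = (if 2 * r + 2 * k = p - 1 then -1 else 0) * (c ^ (m - k) * (m.choose k : ZMod p)) := by
    intro k hk
    rw [← Finset.sum_mul, sum_pow hp _ (by have := Finset.mem_range.mp hk; omega)]
  rw [Finset.sum_congr rfl inner]
  rw [Finset.sum_eq_single (m - r)]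
  · rw [if_pos (by omega), show m - (m - r) = r by omega, Nat.choose_symm (by omega)]
    ring
  · intro k hk hne
    have := Finset.mem_range.mp hk
    rw [if_neg (by omega), zero_mul]
  · intro h
    exact absurd (Finset.mem_range.mpr (by omega)) h


lemma nat_ne_zero (hp : p % 8 = 7) (n : ℕ) (h0 : 0 < n) (hlt : n < 7) : (n : ZMod p) ≠ 0 := by
  have h7 := pge hp
  rw [Ne, ZMod.natCast_eq_zero_iff]
  intro hdvd
  have := Nat.le_of_dvd h0 hdvd
  omega

lemma two_ne (hp : p % 8 = 7) : (2 : ZMod p) ≠ 0 := by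
  have := nat_ne_zero hp 2 (by norm_num) (by norm_num); exact_mod_cast this

lemma three_ne (hp : p % 8 = 7) : (3 : ZMod p) ≠ 0 := by
  have := nat_ne_zero hp 3 (by norm_num) (by norm_num); exact_mod_cast this

lemma m_cast (hp : p % 8 = 7) : ((p / 2 : ℕ) : ZMod p) * 2 = -1 := by
  have h7 := pge hp
  have h : ((2 * (p / 2) : ℕ) : ZMod p) = ((p - 1 : ℕ) : ZMod p) := by
    congr 1; omega
  push_cast at h
  rw [Nat.cast_sub (by omega)] at h
  rw [mul_comm] at h
  rw [h, ZMod.natCast_self]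
  push_cast
  ring

lemma choose2_cast (hp : p % 8 = 7) : (((p / 2).choose 2 : ℕ) : ZMod p) * 8 = 3 := by
  have h7 := pge hp
  set m := p / 2 with hm
  have hm3 : 3 ≤ m := by omega
  have heven : 2 ∣ m * (m - 1) := by
    rcases Nat.even_or_odd m with he | ho
    · exact Dvd.dvd.mul_right he.two_dvd _
    · exact Dvd.dvd.mul_left (by omega : 2 ∣ (m - 1)) _
  have hnat : (m.choose 2) * 2 = m * (m - 1) := by
    rw [Nat.choose_two_right, Nat.div_mul_cancel heven]
  have hcast : ((m.choose 2 : ℕ) : ZMod p) * 2 = (m : ZMod p) * ((m : ZMod p) - 1) := by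
    have := congrArg (fun n : ℕ => (n : ZMod p)) hnat
    push_cast at this
    rw [Nat.cast_sub (by omega)] at this
    push_cast at this
    exact this
  have hmc := m_cast hp
  linear_combination 4 * hcast + (2 * ((m : ℕ) : ZMod p) - 3) * hmc

lemma key_sum (hp : p % 8 = 7) (c e : ZMod p) :
    (∑ x : ZMod p, (x ^ 4 + c * x ^ 2 + e) * (x ^ 2 + c) ^ (p / 2)) * 8 = c ^ 2 - 8 * e := by
  have expand : ∀ x : ZMod p, (x ^ 4 + c * x ^ 2 + e) * (x ^ 2 + c) ^ (p / 2)
      = x ^ (2 * 2) * (x ^ 2 + c) ^ (p / 2) + c * (x ^ (2 * 1) * (x ^ 2 + c) ^ (p / 2))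
        + e * (x ^ (2 * 0) * (x ^ 2 + c) ^ (p / 2)) := by
    intro x; ring
  simp_rw [expand]
  rw [Finset.sum_add_distrib, Finset.sum_add_distrib, ← Finset.mul_sum, ← Finset.mul_sum,
    binom_sum hp c 2 le_rfl, binom_sum hp c 1 (by norm_num), binom_sum hp c 0 (by norm_num)]
  have h2 := choose2_cast hp
  have h1 := m_cast hp
  rw [Nat.choose_one_right, Nat.choose_zero_right]
  push_cast
  linear_combination (-(c^2)) * h2 + (-4 * c^2) * h1


lemma filter_sq_zero : (Finset.univ.filter fun x : ZMod p => x ^ 2 = 0) = {0} := by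
  ext x
  simp [pow_eq_zero_iff]

lemma filter_sq_sq (hp : p % 8 = 7) (b : ZMod p) (hb : b ≠ 0) :
    (Finset.univ.filter fun x : ZMod p => x ^ 2 = b ^ 2) = {b, -b} := by
  ext x
  simp only [Finset.mem_filter, Finset.mem_univ, true_and, Finset.mem_insert, Finset.mem_singleton]
  exact sq_eq_sq_iff_eq_or_eq_neg

lemma card_sq_sq (hp : p % 8 = 7) (b : ZMod p) (hb : b ≠ 0) :
    (Finset.univ.filter fun x : ZMod p => x ^ 2 = b ^ 2).card = 2 := by
  rw [filter_sq_sq hp b hb]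
  rw [Finset.card_insert_of_notMem (by
    simp only [Finset.mem_singleton]
    intro h
    apply two_ne hp
    have : b + b = 0 := by nth_rewrite 1 [h]; ring
    have hb2 : (2 : ZMod p) * b = 0 := by linear_combination this
    rcases mul_eq_zero.mp hb2 with h' | h'
    · exact h'
    · exact absurd h' hb), Finset.card_singleton]

lemma filter_sq_nonsq (d : ZMod p) (hd : ¬ IsSquare d) :
    (Finset.univ.filter fun x : ZMod p => x ^ 2 = d) = ∅ := by
  ext x
  simp only [Finset.mem_filter, Finset.mem_univ, true_and, Finset.notMem_empty, iff_false]
  intro h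
  exact hd ⟨x, by rw [← h]; ring⟩

lemma card_sq_le (hp : p % 8 = 7) (d : ZMod p) :
    (Finset.univ.filter fun x : ZMod p => x ^ 2 = d).card ≤ 2 := by
  by_cases hd : IsSquare d
  · obtain ⟨b, rfl⟩ := hd
    by_cases hb : b = 0
    · subst hb
      rw [show (0 : ZMod p) * 0 = 0 by ring, filter_sq_zero]
      simp
    · rw [show b * b = b ^ 2 by ring, card_sq_sq hp b hb]
  · rw [filter_sq_nonsq d hd]
    simp

lemma chi_sq_eq_one (hp : p % 8 = 7) {d : ZMod p} (hd : d ≠ 0) (h : IsSquare d) :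
    d ^ (p / 2) = 1 := (ZMod.euler_criterion p hd).mp h

lemma chi_nonsq (hp : p % 8 = 7) {d : ZMod p} (hd : d ≠ 0) (h : ¬ IsSquare d) :
    d ^ (p / 2) = -1 := by
  rcases ZMod.pow_div_two_eq_neg_one_or_one p hd with h1 | h1
  · exact absurd ((ZMod.euler_criterion p hd).mpr h1) h
  · exact h1

lemma card_sq_cast (hp : p % 8 = 7) {d : ZMod p} (hd : d ≠ 0) :
    ((Finset.univ.filter fun x : ZMod p => x ^ 2 = d).card : ZMod p) = 1 + d ^ (p / 2) := by
  by_cases h : IsSquare d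
  · obtain ⟨b, rfl⟩ := h
    have hb : b ≠ 0 := by rintro rfl; exact hd (by ring)
    rw [show b * b = b ^ 2 by ring] at hd ⊢
    rw [card_sq_sq hp b hb, chi_sq_eq_one hp hd ⟨b, by ring⟩]
    norm_num
  · rw [filter_sq_nonsq d h, chi_nonsq hp hd h]
    norm_num


lemma fiber_eq (c e x : ZMod p) :
    (Finset.univ.filter fun x' : ZMod p => x' ^ 4 + c * x' ^ 2 + e = x ^ 4 + c * x ^ 2 + e)
      = (Finset.univ.filter fun x' : ZMod p => x' ^ 2 = x ^ 2)
        ∪ (Finset.univ.filter fun x' : ZMod p => x' ^ 2 = -c - x ^ 2) := by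
  ext x'
  simp only [Finset.mem_filter, Finset.mem_univ, true_and, Finset.mem_union]
  constructor
  · intro h
    have hfac : (x' ^ 2 - x ^ 2) * (x' ^ 2 + x ^ 2 + c) = 0 := by linear_combination h
    rcases mul_eq_zero.mp hfac with h' | h'
    · left; linear_combination h'
    · right; linear_combination h'
  · rintro (h | h)
    · linear_combination (x' ^ 2 + x ^ 2 + c) * h
    · linear_combination (x' ^ 2 - x ^ 2) * h

lemma weight (hp : p % 8 = 7) (c : ZMod p) (hc : c ≠ 0) (e x : ZMod p) :
    (((Finset.univ.filter fun x' : ZMod p =>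
        x' ^ 4 + c * x' ^ 2 + e = x ^ 4 + c * x ^ 2 + e).card : ZMod p))⁻¹
      = 3 / 8 - (-c - x ^ 2) ^ (p / 2) / 8
        + (if x = 0 then (7 - 5 * (-c) ^ (p / 2)) / 24 else 0)
        + (if x ^ 2 = -c then -(1 / 24) else 0)
        + (if x ^ 2 = -c / 2 then 1 / 4 else 0) := by
  have h7 := pge hp
  have h2 := two_ne hp
  have h3 := three_ne hp
  have h4 : (4 : ZMod p) ≠ 0 := by
    rw [show (4 : ZMod p) = 2 * 2 by norm_num]; exact mul_ne_zero h2 h2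
  have h8 : (8 : ZMod p) ≠ 0 := by
    rw [show (8 : ZMod p) = 2 * 4 by norm_num]; exact mul_ne_zero h2 h4
  have h24 : (24 : ZMod p) ≠ 0 := by
    rw [show (24 : ZMod p) = 3 * 8 by norm_num]; exact mul_ne_zero h3 h8
  have hm2 : 2 * (p / 2) = p - 1 := by omega
  have hmne : p / 2 ≠ 0 := by omega
  have hcneg : (-c : ZMod p) ≠ 0 := neg_ne_zero.mpr hc
  rw [fiber_eq]
  by_cases hmid : x ^ 2 = -c / 2
  · -- the two root sets coincide
    have hx2 : x ^ 2 * 2 = -c := by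
      field_simp at hmid
      linear_combination hmid
    have hBA : -c - x ^ 2 = x ^ 2 := by linear_combination -hx2
    have hx0 : x ≠ 0 := by
      rintro rfl
      rw [show (0 : ZMod p) ^ 2 * 2 = 0 by ring] at hx2
      exact hc (neg_eq_zero.mp hx2.symm)
    rw [hBA, Finset.union_self, card_sq_sq hp x hx0]
    have hchi : (x ^ 2) ^ (p / 2) = 1 := by
      rw [← pow_mul, hm2, ZMod.pow_card_sub_one_eq_one hx0]
    rw [hchi, if_neg hx0, if_neg (by
      intro h
      have hxz : x ^ 2 = 0 := by linear_combination hx2 - h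
      exact hx0 (by simpa using pow_eq_zero_iff (n := 2) (by norm_num) |>.mp hxz)), if_pos hmid]
    push_cast
    field_simp
    ring
  · -- disjoint root sets
    have hdisj : Disjoint
        (Finset.univ.filter fun x' : ZMod p => x' ^ 2 = x ^ 2)
        (Finset.univ.filter fun x' : ZMod p => x' ^ 2 = -c - x ^ 2) := by
      rw [Finset.disjoint_left]
      intro a ha hb
      simp only [Finset.mem_filter, Finset.mem_univ, true_and] at ha hb
      apply hmid
      rw [eq_div_iff h2]
      linear_combination hb - ha
    rw [Finset.card_union_of_disjoint hdisj]
    by_cases hx0 : x = 0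
    · subst hx0
      rw [show (0 : ZMod p) ^ 2 = 0 by norm_num, show (-c - 0 : ZMod p) = -c by ring]
      rw [filter_sq_zero, Finset.card_singleton]
      rw [if_pos rfl, if_neg (fun h => hcneg (by rw [← h])), if_neg (by
        intro h
        apply hc
        have : -c / 2 * 2 = -c := by field_simp
        rw [← h] at this
        simpa using this)]
      by_cases hsq : IsSquare (-c : ZMod p)
      · obtain ⟨b, hb⟩ := hsq
        have hbne : b ≠ 0 := by rintro rfl; exact hcneg (by rw [hb]; ring)
        have hbsq : -c = b ^ 2 := by rw [hb]; ring
        have hchi : ((b ^ 2 : ZMod p)) ^ (p / 2) = 1 := by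
          rw [← pow_mul, hm2, ZMod.pow_card_sub_one_eq_one hbne]
        rw [hbsq, card_sq_sq hp b hbne, hchi]
        push_cast
        field_simp
        ring
      · rw [filter_sq_nonsq _ hsq, Finset.card_empty, chi_nonsq hp hcneg hsq]
        push_cast
        field_simp
        ring
    · rw [card_sq_sq hp x hx0]
      rw [if_neg hx0, if_neg hmid]
      by_cases hB0 : -c - x ^ 2 = 0
      · rw [hB0, filter_sq_zero, Finset.card_singleton]
        rw [zero_pow hmne, if_pos (by linear_combination -hB0)]
        push_cast
        field_simp
        ring
      · rw [if_neg (fun h => hB0 (by rw [h]; ring))]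
        by_cases hsq : IsSquare (-c - x ^ 2 : ZMod p)
        · obtain ⟨b, hb⟩ := hsq
          have hbne : b ≠ 0 := by rintro rfl; exact hB0 (by rw [hb]; ring)
          have hbsq : -c - x ^ 2 = b ^ 2 := by rw [hb]; ring
          have hchi : ((b ^ 2 : ZMod p)) ^ (p / 2) = 1 := by
            rw [← pow_mul, hm2, ZMod.pow_card_sub_one_eq_one hbne]
          rw [hbsq, card_sq_sq hp b hbne, hchi]
          push_cast
          field_simp
          ring
        · rw [filter_sq_nonsq _ hsq, Finset.card_empty, chi_nonsq hp hB0 hsq]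
          push_cast
          field_simp
          ring


lemma sum_f (hp : p % 8 = 7) (c e : ZMod p) :
    ∑ x : ZMod p, (x ^ 4 + c * x ^ 2 + e) = 0 := by
  have h7 := pge hp
  rw [Finset.sum_add_distrib, Finset.sum_add_distrib, ← Finset.mul_sum]
  rw [sum_pow hp 4 (by omega), sum_pow hp 2 (by omega)]
  rw [if_neg (by omega), if_neg (by omega), Finset.sum_const, Finset.card_univ, ZMod.card,
    nsmul_eq_mul, ZMod.natCast_self]
  ring

lemma odd_half (hp : p % 8 = 7) : Odd (p / 2) := by
  have h7 := pge hp
  exact Nat.odd_iff.mpr (by omega)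

lemma chi_two (hp : p % 8 = 7) : (2 : ZMod p) ^ (p / 2) = 1 := by
  have h7 := pge hp
  exact chi_sq_eq_one hp (two_ne hp)
    ((ZMod.exists_sq_eq_two_iff (by omega)).mpr (Or.inr hp))

lemma chi_neg_c_half (hp : p % 8 = 7) (c : ZMod p) :
    (-c / 2 : ZMod p) ^ (p / 2) = (-c) ^ (p / 2) := by
  rw [div_pow, chi_two hp, div_one]

lemma image_sum (hp : p % 8 = 7) (c e : ZMod p) (hc : c ≠ 0) :
    (Finset.univ.image (fun x : ZMod p => x ^ 4 + c * x ^ 2 + e)).sum id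
      = (c ^ 2 - 8 * e) / 64 + e * ((7 - 5 * (-c) ^ (p / 2)) / 24)
        + (1 + (-c) ^ (p / 2)) * (e * (-(1 / 24)))
        + (1 + (-c) ^ (p / 2)) * ((e - c ^ 2 / 4) * (1 / 4)) := by
  classical
  have h7 := pge hp
  have h2 := two_ne hp
  have h8 : (8 : ZMod p) ≠ 0 := by
    have h4 : (4 : ZMod p) ≠ 0 := by
      rw [show (4 : ZMod p) = 2 * 2 by norm_num]; exact mul_ne_zero h2 h2
    rw [show (8 : ZMod p) = 2 * 4 by norm_num]; exact mul_ne_zero h2 h4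
  have hcneg : (-c : ZMod p) ≠ 0 := neg_ne_zero.mpr hc
  have hchalf : (-c / 2 : ZMod p) ≠ 0 := div_ne_zero hcneg h2
  set f : ZMod p → ZMod p := fun x => x ^ 4 + c * x ^ 2 + e with hf
  -- step 1 : image sum as weighted sum over the domain
  have key : ∀ b ∈ Finset.univ.image f,
      ((Finset.univ.filter fun a : ZMod p => f a = b).card : ℕ) •
        (b * (((Finset.univ.filter fun a : ZMod p => f a = b).card : ZMod p))⁻¹) = b := by
    intro b hb
    obtain ⟨x, -, rfl⟩ := Finset.mem_image.mp hb
    have hle : (Finset.univ.filter fun a : ZMod p => f a = f x).card ≤ 4 := by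
      have := fiber_eq c e x
      simp only [hf] at this ⊢
      rw [this]
      exact le_trans (Finset.card_union_le _ _)
        (Nat.add_le_add (card_sq_le hp _) (card_sq_le hp _))
    have hpos : 0 < (Finset.univ.filter fun a : ZMod p => f a = f x).card :=
      Finset.card_pos.mpr ⟨x, by simp⟩
    have hne : (((Finset.univ.filter fun a : ZMod p => f a = f x).card : ℕ) : ZMod p) ≠ 0 :=
      nat_ne_zero hp _ hpos (by omega)
    rw [nsmul_eq_mul, mul_comm, mul_assoc, inv_mul_cancel₀ hne, mul_one]
  have hQ : (Finset.univ.image f).sum id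
      = ∑ x : ZMod p, f x * (((Finset.univ.filter fun a : ZMod p => f a = f x).card : ZMod p))⁻¹ := by
    rw [Finset.sum_comp (fun b : ZMod p =>
      b * (((Finset.univ.filter fun a : ZMod p => f a = b).card : ZMod p))⁻¹) f]
    rw [Finset.sum_congr rfl key]
    simp
  rw [hQ]
  -- step 2 : pointwise weights
  have hodd := odd_half hp
  have hneg : ∀ x : ZMod p, (-c - x ^ 2) ^ (p / 2) = -((x ^ 2 + c) ^ (p / 2)) := by
    intro x
    rw [show (-c - x ^ 2 : ZMod p) = -(x ^ 2 + c) by ring, hodd.neg_pow]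
  have hw : ∀ x : ZMod p,
      f x * (((Finset.univ.filter fun a : ZMod p => f a = f x).card : ZMod p))⁻¹
      = f x * (3 / 8) + f x * (x ^ 2 + c) ^ (p / 2) * (1 / 8)
        + ((if x = 0 then f x * ((7 - 5 * (-c) ^ (p / 2)) / 24) else 0)
          + (if x ^ 2 = -c then f x * (-(1 / 24)) else 0)
          + (if x ^ 2 = -c / 2 then f x * (1 / 4) else 0)) := by
    intro x
    have := weight hp c hc e x
    simp only [hf] at this ⊢
    rw [this, hneg x]
    simp only [mul_add, mul_sub, mul_ite, mul_zero]
    ring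
  rw [Finset.sum_congr rfl (fun x _ => hw x)]
  simp only [Finset.sum_add_distrib]
  -- evaluate the five pieces
  have p1 : ∑ x : ZMod p, f x * (3 / 8) = 0 := by
    rw [← Finset.sum_mul]
    simp only [hf]
    rw [sum_f hp c e, zero_mul]
  have hks : ∑ x : ZMod p, f x * (x ^ 2 + c) ^ (p / 2) = (c ^ 2 - 8 * e) / 8 := by
    rw [eq_div_iff h8]
    simp only [hf]
    exact key_sum hp c e
  have p2 : ∑ x : ZMod p, f x * (x ^ 2 + c) ^ (p / 2) * (1 / 8) = (c ^ 2 - 8 * e) / 8 * (1 / 8) := by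
    rw [← Finset.sum_mul, hks]
  have p3 : ∑ x : ZMod p, (if x = 0 then f x * ((7 - 5 * (-c) ^ (p / 2)) / 24) else 0)
      = e * ((7 - 5 * (-c) ^ (p / 2)) / 24) := by
    simp [hf]
  have p4 : ∑ x : ZMod p, (if x ^ 2 = -c then f x * (-(1 / 24)) else 0)
      = (1 + (-c) ^ (p / 2)) * (e * (-(1 / 24))) := by
    rw [← Finset.sum_filter]
    rw [Finset.sum_congr rfl (fun x hx => by
      have hx2 : x ^ 2 = -c := (Finset.mem_filter.mp hx).2
      show f x * (-(1 / 24)) = e * (-(1 / 24))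
      simp only [hf]
      congr 1
      linear_combination x ^ 2 * hx2)]
    rw [Finset.sum_const, nsmul_eq_mul, card_sq_cast hp hcneg]
  have p5 : ∑ x : ZMod p, (if x ^ 2 = -c / 2 then f x * (1 / 4) else 0)
      = (1 + (-c) ^ (p / 2)) * ((e - c ^ 2 / 4) * (1 / 4)) := by
    rw [← Finset.sum_filter]
    rw [Finset.sum_congr rfl (fun x hx => by
      have hx2 : x ^ 2 = -c / 2 := (Finset.mem_filter.mp hx).2
      have hx2' : x ^ 2 * 2 = -c := by
        rw [hx2]; field_simp
      show f x * (1 / 4) = (e - c ^ 2 / 4) * (1 / 4)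
      simp only [hf]
      congr 1
      have h4 : (4 : ZMod p) ≠ 0 := by
        rw [show (4 : ZMod p) = 2 * 2 by norm_num]; exact mul_ne_zero h2 h2
      field_simp
      linear_combination (2 * x ^ 2 + c) * hx2')]
    rw [Finset.sum_const, nsmul_eq_mul, card_sq_cast hp hchalf, chi_neg_c_half hp c]
  rw [p1, p2, p3, p4, p5]
  have h3 := three_ne hp
  have h4 : (4 : ZMod p) ≠ 0 := by
    rw [show (4 : ZMod p) = 2 * 2 by norm_num]; exact mul_ne_zero h2 h2
  have h24 : (24 : ZMod p) ≠ 0 := by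
    rw [show (24 : ZMod p) = 3 * 8 by norm_num]; exact mul_ne_zero h3 h8
  have h64 : (64 : ZMod p) ≠ 0 := by
    rw [show (64 : ZMod p) = 8 * 8 by norm_num]; exact mul_ne_zero h8 h8
  field_simp
  ring

end SRSAux

theorem sum_residues_seven_mod_eight (p : ℕ) [Fact p.Prime] (hp : p % 8 = 7)
    (c e : ℤ) (hc : ¬ (p : ℤ) ∣ c) :
    (IsSquare (c : ZMod p) →
      ((Finset.univ.image (fun x : ZMod p =>
          x ^ 4 + (c : ZMod p) * x ^ 2 + (e : ZMod p))).sum id) =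
        (1 / 64 : ZMod p) * (c : ZMod p) ^ 2 + (3 / 8 : ZMod p) * (e : ZMod p)) ∧
    (¬ IsSquare (c : ZMod p) →
      ((Finset.univ.image (fun x : ZMod p =>
          x ^ 4 + (c : ZMod p) * x ^ 2 + (e : ZMod p))).sum id) =
        -(7 / 64 : ZMod p) * (c : ZMod p) ^ 2 + (3 / 8 : ZMod p) * (e : ZMod p)) := by
  have hc0 : ((c : ℤ) : ZMod p) ≠ 0 := by
    rw [Ne, ZMod.intCast_zmod_eq_zero_iff_dvd]; exact hc
  have h2 := SRSAux.two_ne hp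
  have h3 := SRSAux.three_ne hp
  have h4 : (4 : ZMod p) ≠ 0 := by
    rw [show (4 : ZMod p) = 2 * 2 by norm_num]; exact mul_ne_zero h2 h2
  have h8 : (8 : ZMod p) ≠ 0 := by
    rw [show (8 : ZMod p) = 2 * 4 by norm_num]; exact mul_ne_zero h2 h4
  have h24 : (24 : ZMod p) ≠ 0 := by
    rw [show (24 : ZMod p) = 3 * 8 by norm_num]; exact mul_ne_zero h3 h8
  have h64 : (64 : ZMod p) ≠ 0 := by
    rw [show (64 : ZMod p) = 8 * 8 by norm_num]; exact mul_ne_zero h8 h8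
  have hQ := SRSAux.image_sum hp (c : ZMod p) (e : ZMod p) hc0
  have hodd := SRSAux.odd_half hp
  have hneg1 : ((-1 : ZMod p)) ^ (p / 2) = -1 := by
    rw [hodd.neg_pow, one_pow]
  constructor
  · intro hsq
    have hchi : ((c : ZMod p)) ^ (p / 2) = 1 := SRSAux.chi_sq_eq_one hp hc0 hsq
    have ht : (-(c : ZMod p)) ^ (p / 2) = -1 := by
      rw [show (-(c : ZMod p)) = -1 * (c : ZMod p) by ring, mul_pow, hneg1, hchi, mul_one]
    rw [hQ, ht]
    field_simp
    ring
  · intro hsq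
    have hchi : ((c : ZMod p)) ^ (p / 2) = -1 := SRSAux.chi_nonsq hp hc0 hsq
    have ht : (-(c : ZMod p)) ^ (p / 2) = 1 := by
      rw [show (-(c : ZMod p)) = -1 * (c : ZMod p) by ring, mul_pow, hneg1, hchi]
      norm_num
    rw [hQ, ht]
    field_simp
    ring
end

section
/- Let p ≥ 7 be a prime with p ≡ 3 (mod 4), and let S(p) = { ∑ of the set of distinct residues {x^4 + cx^2 mod p : x ∈ Z/pZ} : c ∈ Z/pZ }. Then S(p) = Z/pZ if −1 ∈ S(p), and S(p) = { x^2 mod p : x ∈ Z/pZ } if −1 ∉ S(p). -/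
/-!
Write `g t = t ^ 2 + c * t`, so that the values of `x ^ 4 + c * x ^ 2` are `g` of the squares.
The fibres of `g` are the pairs `{t, -c - t}`, hence twice the sum of the distinct values is
`2 ∑ g t` over the squares `t`, minus the sum over the squares `t` whose partner `-c - t` is again
a square, plus the fixed point `t = -c / 2` if it is a square. As `-1` is not a square, Euler's
criterion gives `2 [-u is a square] u = u - u ^ ((p + 1) / 2)`, and so every term becomes a power
sum `∑ x ^ i`, which vanishes unless `p - 1 ∣ i`. For `c = -8 d` the result is `d ^ 2` when `d` is
not a square and `-7 d ^ 2` when it is, so `S` consists of the squares together with `-7` times the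
squares. Whether this is everything or only the squares depends on whether `-7` is a nonsquare,
that is, on whether `-1 ∈ S`.
-/

open Finset

section InvolutiveFibres

variable {α β M : Type*} [DecidableEq α] [DecidableEq β] [AddCommGroup M]

theorem two_nsmul_sum_image_of_fiber_subset_pair {s : Finset α} {f : α → β} {σ : α → α}
    (hσ : Function.Involutive σ) (hfσ : ∀ a, f (σ a) = f a)
    (hfib : ∀ a ∈ s, ∀ b ∈ s, f b = f a → b = a ∨ b = σ a) (h : β → M) :
    2 • ∑ v ∈ s.image f, h v =
      2 • ∑ a ∈ s, h (f a) - ∑ a ∈ s with σ a ∈ s, h (f a) + ∑ a ∈ s with σ a = a, h (f a) := by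
  -- the right-hand side gives every fibre `{a, σ a} ∩ s` of `f` total weight `2`
  set w : α → M := fun a =>
    2 • h (f a) - (if σ a ∈ s then h (f a) else 0) + if σ a = a then h (f a) else 0
  have hw : 2 • ∑ a ∈ s, h (f a) - ∑ a ∈ s with σ a ∈ s, h (f a) +
      ∑ a ∈ s with σ a = a, h (f a) = ∑ a ∈ s, w a := by
    simp only [w, sum_add_distrib, sum_sub_distrib, sum_filter, smul_sum]
  rw [hw, smul_sum]
  refine sum_image' w fun a ha => ?_
  have hfiber : {b ∈ s | f b = f a} = {b ∈ ({a, σ a} : Finset α) | b ∈ s} := by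
    ext b
    simp only [mem_filter, mem_insert, mem_singleton]
    constructor
    · rintro ⟨hb, hfb⟩
      exact ⟨hfib a ha b hb hfb, hb⟩
    · rintro ⟨rfl | rfl, hb⟩
      · exact ⟨hb, rfl⟩
      · exact ⟨hb, hfσ a⟩
  rw [hfiber, sum_filter]
  by_cases hfix : σ a = a
  · simp [w, hfix, ha, two_nsmul]
  · rw [sum_pair (Ne.symm hfix)]
    by_cases hσs : σ a ∈ s
    · simp only [w, hσ a, hfσ, ha, hσs, hfix, if_true, if_false, (Ne.symm hfix)]
      abel
    · simp [w, ha, hσs, hfix]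

end InvolutiveFibres

section QuarticValueSums

variable {F : Type*} [Field F]

theorem isSquare_four_mul_iff (h2 : (2 : F) ≠ 0) {d : F} : IsSquare (4 * d) ↔ IsSquare d := by
  constructor
  · rintro ⟨r, hr⟩
    exact ⟨r / 2, by field_simp; linear_combination hr⟩
  · rintro ⟨r, rfl⟩
    exact ⟨2 * r, by ring⟩

variable [Fintype F]

theorem ringChar_ne_two_of_card_mod_four_eq_three (hF : Fintype.card F % 4 = 3) :
    ringChar F ≠ 2 := by
  rw [Ne, FiniteField.even_card_iff_char_two]
  omega

theorem sum_pow_four_add_mul_sq (h5 : 5 < Fintype.card F) (c : F) :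
    ∑ x : F, (x ^ 4 + c * x ^ 2) = 0 := by
  rw [sum_add_distrib, ← mul_sum, FiniteField.sum_pow_lt_card_sub_one _ _ (by omega),
    FiniteField.sum_pow_lt_card_sub_one _ _ (by omega), mul_zero, add_zero]

variable [DecidableEq F]

theorem mem_image_sq_iff_isSquare {v : F} :
    v ∈ univ.image (fun x : F => x ^ 2) ↔ IsSquare v := by
  simp [isSquare_iff_exists_sq, eq_comm]

theorem two_nsmul_sum_image_sq {M : Type*} [AddCommGroup M] (hchar : ringChar F ≠ 2)
    (φ : F → M) :
    2 • ∑ t ∈ univ.image (fun x : F => x ^ 2), φ t = ∑ x, φ (x ^ 2) + φ 0 := by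
  rw [two_nsmul_sum_image_of_fiber_subset_pair (f := fun x : F => x ^ 2) neg_involutive neg_sq
    (fun a _ b _ h => sq_eq_sq_iff_eq_or_eq_neg.1 h) φ]
  have hfix : ({a | -a = a} : Finset F) = {0} := by
    ext a
    simp [Ring.eq_self_iff_eq_zero_of_char_ne_two hchar]
  simp only [mem_univ, filter_true, hfix, sum_singleton, two_nsmul, add_sub_cancel_right,
    zero_pow two_ne_zero]

theorem sum_image_sq_sq_add_mul (hchar : ringChar F ≠ 2) (h5 : 5 < Fintype.card F) (c : F) :
    ∑ t ∈ univ.image (fun x : F => x ^ 2), (t ^ 2 + c * t) = 0 := by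
  have h := two_nsmul_sum_image_sq hchar fun t : F => t ^ 2 + c * t
  simp only [← pow_mul, Nat.reduceMul, sum_pow_four_add_mul_sq h5, zero_pow two_ne_zero, mul_zero,
    two_nsmul, ← two_mul] at h
  exact (mul_eq_zero.1 h).resolve_left (Ring.two_ne_zero hchar)

theorem sum_pow_eq_ite {i : ℕ} (hi : i ≠ 0) :
    ∑ x : F, x ^ i = if Fintype.card F - 1 ∣ i then -1 else 0 := by
  rw [Fintype.sum_eq_add_sum_subtype_ne _ 0, zero_pow hi, zero_add,
    ← FiniteField.sum_pow_units F i, ← Fintype.sum_equiv unitsEquivNeZero _ _ fun _ => rfl]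
  rfl

theorem eight_mul_sum_sq_mul_add_pow (hodd : Fintype.card F % 2 = 1)
    (h7 : 7 ≤ Fintype.card F) (c : F) :
    8 * ∑ x : F, x ^ 2 * (x ^ 2 + c) ^ (Fintype.card F / 2 + 1) = c ^ 2 := by
  obtain ⟨k, hk⟩ : ∃ k, Fintype.card F = 2 * k + 3 := ⟨Fintype.card F / 2 - 1, by omega⟩
  rw [show Fintype.card F / 2 + 1 = k + 2 by omega]
  have hexpand : ∀ x : F, x ^ 2 * (x ^ 2 + c) ^ (k + 2) =
      ∑ j ∈ range (k + 3), x ^ (2 * j + 2) * (c ^ (k + 2 - j) * (k + 2).choose j) := by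
    intro x
    rw [add_pow, mul_sum]
    exact sum_congr rfl fun j _ => by ring
  -- only `j = k` survives, where `2 * j + 2 = Fintype.card F - 1`
  have hpow : ∀ j ∈ range (k + 3), ∑ x : F, x ^ (2 * j + 2) = if j = k then -1 else 0 := by
    intro j hj
    rw [sum_pow_eq_ite (by omega), hk]
    congr 1
    refine propext ⟨fun hdvd => ?_, fun hj => ⟨1, by omega⟩⟩
    have := Nat.eq_of_dvd_of_lt_two_mul (by omega) hdvd (by rw [mem_range] at hj; omega)
    omega
  have hchoose : 2 * (k + 2).choose k = (k + 2) * (k + 1) := by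
    have h : (k + 2) * (k + 1) = (k + 2).choose 2 * 2 := by
      simpa using Nat.add_one_mul_choose_eq (k + 1) 1
    rw [Nat.choose_symm_add, h, mul_comm]
  have hchooseF := congrArg (Nat.cast : ℕ → F) hchoose
  push_cast at hchooseF
  have hchar : (2 * k + 3 : F) = 0 := by exact_mod_cast hk ▸ FiniteField.cast_card_eq_zero F
  calc 8 * ∑ x : F, x ^ 2 * (x ^ 2 + c) ^ (k + 2)
      = 8 * ∑ j ∈ range (k + 3),
          (∑ x : F, x ^ (2 * j + 2)) * (c ^ (k + 2 - j) * (k + 2).choose j) := by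
        simp_rw [hexpand, sum_mul]
        rw [sum_comm]
    _ = 8 * -(c ^ 2 * (k + 2).choose k) := by
        rw [sum_congr rfl fun j hj => by rw [hpow j hj]]
        simp
    _ = c ^ 2 := by
        linear_combination (-4 * c ^ 2) * hchooseF - (2 * k + 3) * c ^ 2 * hchar

theorem isSquare_neg_iff_not_isSquare (hF : Fintype.card F % 4 = 3) {u : F} (hu : u ≠ 0) :
    IsSquare (-u) ↔ ¬IsSquare u := by
  have hχ : quadraticChar F (-1) = -1 :=
    quadraticChar_neg_one_iff_not_isSquare.2 (by rw [FiniteField.isSquare_neg_one_iff]; omega)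
  rw [← quadraticChar_one_iff_isSquare (neg_ne_zero.2 hu), ← quadraticChar_neg_one_iff_not_isSquare,
    neg_eq_neg_one_mul, map_mul, hχ]
  omega

theorem two_mul_ite_isSquare_neg (hF : Fintype.card F % 4 = 3) (u : F) :
    2 * (if IsSquare (-u) then u else 0) = u - u ^ (Fintype.card F / 2 + 1) := by
  rcases eq_or_ne u 0 with rfl | hu
  · simp
  have hchar := ringChar_ne_two_of_card_mod_four_eq_three hF
  rw [pow_succ']
  rcases FiniteField.pow_dichotomy hchar hu with h | h
  · have hsq : IsSquare u := (FiniteField.isSquare_iff hchar hu).2 h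
    rw [if_neg fun hneg => (isSquare_neg_iff_not_isSquare hF hu).1 hneg hsq, h]
    ring
  · have hnsq : ¬IsSquare u := fun hsq =>
      Ring.neg_one_ne_one_of_char_ne_two hchar (h ▸ (FiniteField.isSquare_iff hchar hu).1 hsq)
    rw [if_pos ((isSquare_neg_iff_not_isSquare hF hu).2 hnsq), h]
    ring

theorem thirty_two_mul_sum_image_sq_filter (hF : Fintype.card F % 4 = 3) (h7 : 7 ≤ Fintype.card F)
    (c : F) :
    32 * ∑ t ∈ univ.image (fun x : F => x ^ 2) with IsSquare (-(t + c)), (t ^ 2 + c * t) =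
      -c ^ 2 := by
  have hchar := ringChar_ne_two_of_card_mod_four_eq_three hF
  rw [sum_filter]
  set T := ∑ t ∈ univ.image (fun x : F => x ^ 2),
    if IsSquare (-(t + c)) then t ^ 2 + c * t else 0 with hT
  have h2T : 2 * T = ∑ x : F, if IsSquare (-(x ^ 2 + c)) then (x ^ 2) ^ 2 + c * x ^ 2 else 0 := by
    rw [two_mul, ← two_nsmul, hT, two_nsmul_sum_image_sq hchar]
    simp
  have h4T : 4 * T = ∑ x : F, (x ^ 4 + c * x ^ 2) -
      ∑ x : F, x ^ 2 * (x ^ 2 + c) ^ (Fintype.card F / 2 + 1) := by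
    rw [show 4 * T = 2 * (2 * T) by ring, h2T, mul_sum, ← sum_sub_distrib]
    refine sum_congr rfl fun x _ => ?_
    rw [mul_ite, mul_zero]
    have := congrArg (x ^ 2 * ·) (two_mul_ite_isSquare_neg hF (x ^ 2 + c))
    simp only [mul_ite, mul_zero] at this
    split_ifs at this ⊢ <;> linear_combination this
  rw [sum_pow_four_add_mul_sq (by omega)] at h4T
  linear_combination 8 * h4T - eight_mul_sum_sq_mul_add_pow (by omega) h7 c

theorem sum_image_quartic (hF : Fintype.card F % 4 = 3) (h7 : 7 ≤ Fintype.card F) (d : F) :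
    ∑ v ∈ univ.image (fun x : F => x ^ 4 + -8 * d * x ^ 2), v =
      if IsSquare d then -7 * d ^ 2 else d ^ 2 := by
  have hchar := ringChar_ne_two_of_card_mod_four_eq_three hF
  have h2 : (2 : F) ≠ 0 := Ring.two_ne_zero hchar
  set Q := univ.image fun x : F => x ^ 2
  have himage : univ.image (fun x : F => x ^ 4 + -8 * d * x ^ 2) =
      Q.image (fun t => t ^ 2 + -8 * d * t) := by
    rw [image_image]
    congr 1
    funext x
    simp only [Function.comp_apply]
    ring
  have hpair := two_nsmul_sum_image_of_fiber_subset_pair (s := Q) (f := fun t => t ^ 2 + -8 * d * t)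
    (σ := fun t => -(t + -8 * d)) (fun t => by ring) (fun t => by ring) (fun a _ b _ hab => by
      have : (b - a) * (b + (a + -8 * d)) = 0 := by linear_combination hab
      rcases mul_eq_zero.1 this with h | h
      · exact Or.inl (by linear_combination h)
      · exact Or.inr (by linear_combination h)) id
  have hpartners : ∑ t ∈ Q with -(t + -8 * d) ∈ Q, (t ^ 2 + -8 * d * t) = -2 * d ^ 2 := by
    have h32 := thirty_two_mul_sum_image_sq_filter hF h7 (-8 * d)
    simp only [← mem_image_sq_iff_isSquare] at h32
    have h32' : (32 : F) ≠ 0 := by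
      rw [show (32 : F) = 2 ^ 5 by norm_num]
      exact pow_ne_zero _ h2
    exact mul_left_cancel₀ h32' (by linear_combination h32)
  have hfixed : ∑ t ∈ Q with -(t + -8 * d) = t, (t ^ 2 + -8 * d * t) =
      if IsSquare d then -16 * d ^ 2 else 0 := by
    rw [filter_congr fun t _ => show -(t + -8 * d) = t ↔ t = 4 * d from
      ⟨fun h => mul_left_cancel₀ h2 (by linear_combination -h), fun h => by subst h; ring⟩,
      filter_eq']
    by_cases hd : IsSquare d
    · rw [if_pos hd, if_pos (mem_image_sq_iff_isSquare.2 ((isSquare_four_mul_iff h2).2 hd)),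
        sum_singleton]
      ring
    · rw [if_neg hd, if_neg fun h => hd ((isSquare_four_mul_iff h2).1
        (mem_image_sq_iff_isSquare.1 h)), sum_empty]
  simp only [id] at hpair
  rw [sum_image_sq_sq_add_mul hchar (by omega), hpartners, hfixed, two_nsmul, two_nsmul,
    ← himage] at hpair
  refine mul_left_cancel₀ h2 ?_
  split_ifs at hpair ⊢ <;> linear_combination hpair

theorem image_sum_image_quartic (hF : Fintype.card F % 4 = 3) (h7 : 7 ≤ Fintype.card F) :
    univ.image (fun c : F => (univ.image fun x : F => x ^ 4 + c * x ^ 2).sum id) =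
      univ.image (fun d : F => if IsSquare d then -7 * d ^ 2 else d ^ 2) := by
  have h8 : (-8 : F) ≠ 0 := by
    rw [neg_ne_zero, show (8 : F) = 2 ^ 3 by norm_num]
    exact pow_ne_zero _ (Ring.two_ne_zero (ringChar_ne_two_of_card_mod_four_eq_three hF))
  have hsurj : Function.Surjective fun d : F => -8 * d := fun c => ⟨c / -8, mul_div_cancel₀ c h8⟩
  have hreparam : univ.image (fun c : F => (univ.image fun x : F => x ^ 4 + c * x ^ 2).sum id) =
      (univ.image fun d : F => -8 * d).image
        (fun c : F => (univ.image fun x : F => x ^ 4 + c * x ^ 2).sum id) := by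
    rw [image_univ_of_surjective hsurj]
  rw [hreparam, image_image]
  exact image_congr fun d _ => sum_image_quartic hF h7 d

theorem image_ite_isSquare (hF : Fintype.card F % 4 = 3) :
    univ.image (fun d : F => if IsSquare d then -7 * d ^ 2 else d ^ 2) =
      univ.image (fun e : F => e ^ 2) ∪ univ.image (fun e : F => -7 * e ^ 2) := by
  ext v
  simp only [mem_union, mem_image, mem_univ, true_and]
  constructor
  · rintro ⟨d, rfl⟩
    split_ifs
    exacts [Or.inr ⟨d, rfl⟩, Or.inl ⟨d, rfl⟩]
  · rintro (⟨e, rfl⟩ | ⟨e, rfl⟩) <;> by_cases he : IsSquare e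
    · rcases eq_or_ne e 0 with rfl | he0
      · exact ⟨0, by simp⟩
      · refine ⟨-e, ?_⟩
        rw [if_neg (fun h => (isSquare_neg_iff_not_isSquare hF he0).1 h he), neg_sq]
    · exact ⟨e, if_neg he⟩
    · exact ⟨e, if_pos he⟩
    · have he0 : e ≠ 0 := by rintro rfl; exact he IsSquare.zero
      exact ⟨-e, by rw [if_pos ((isSquare_neg_iff_not_isSquare hF he0).2 he), neg_sq]⟩

theorem sq_union_neg_seven_mul_sq_eq_univ_of_neg_one_mem (hF : Fintype.card F % 4 = 3)
    (h : -1 ∈ univ.image (fun e : F => e ^ 2) ∪ univ.image (fun e : F => -7 * e ^ 2)) :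
    univ.image (fun e : F => e ^ 2) ∪ univ.image (fun e : F => -7 * e ^ 2) = univ := by
  have hneg1 : ¬IsSquare (-1 : F) := by rw [FiniteField.isSquare_neg_one_iff]; omega
  rw [mem_union, mem_image_sq_iff_isSquare, or_iff_right hneg1] at h
  obtain ⟨e, -, he⟩ := mem_image.1 h
  refine eq_univ_of_forall fun v => ?_
  by_cases hv : IsSquare v
  · exact mem_union_left _ (mem_image_sq_iff_isSquare.2 hv)
  · have hv0 : v ≠ 0 := by rintro rfl; exact hv IsSquare.zero
    obtain ⟨r, hr⟩ := (isSquare_neg_iff_not_isSquare hF hv0).2 hv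
    exact mem_union_right _ (mem_image.2 ⟨r * e, mem_univ _, by linear_combination r ^ 2 * he + hr⟩)

theorem sq_union_neg_seven_mul_sq_eq_sq_of_neg_one_not_mem (hF : Fintype.card F % 4 = 3)
    (h : -1 ∉ univ.image (fun e : F => e ^ 2) ∪ univ.image (fun e : F => -7 * e ^ 2)) :
    univ.image (fun e : F => e ^ 2) ∪ univ.image (fun e : F => -7 * e ^ 2) =
      univ.image (fun e : F => e ^ 2) := by
  have h7 : IsSquare (-7 : F) := by
    by_contra h7
    have h70 : (7 : F) ≠ 0 := by rintro h0; exact h7 (by rw [h0, neg_zero]; exact IsSquare.zero)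
    obtain ⟨r, hr⟩ := (isSquare_neg_iff_not_isSquare hF (neg_ne_zero.2 h70)).2 h7
    have hr0 : r ≠ 0 := by rintro rfl; exact h70 (by simpa using hr)
    exact h (mem_union_right _ (mem_image.2 ⟨r⁻¹, mem_univ _, by
      field_simp; linear_combination -hr⟩))
  refine union_eq_left.2 fun v hv => ?_
  obtain ⟨e, -, rfl⟩ := mem_image.1 hv
  exact mem_image_sq_iff_isSquare.2 (h7.mul (IsSquare.sq e))

end QuarticValueSums

theorem set_of_sums_three_mod_four (p : ℕ) [Fact p.Prime] (hp7 : 7 ≤ p) (hp : p % 4 = 3) :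
    let S : Finset (ZMod p) := Finset.univ.image (fun c : ZMod p =>
      (Finset.univ.image (fun x : ZMod p => x ^ 4 + c * x ^ 2)).sum id)
    ((-1 : ZMod p) ∈ S → S = Finset.univ) ∧
    ((-1 : ZMod p) ∉ S → S = Finset.univ.image (fun x : ZMod p => x ^ 2)) := by
  intro S
  have hF : Fintype.card (ZMod p) % 4 = 3 := by rwa [ZMod.card]
  have hS : S = univ.image (fun e : ZMod p => e ^ 2) ∪ univ.image (fun e => -7 * e ^ 2) := by
    rw [← image_ite_isSquare hF, ← image_sum_image_quartic hF (by rwa [ZMod.card])]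
  rw [hS]
  exact ⟨sq_union_neg_seven_mul_sq_eq_univ_of_neg_one_mem hF,
    sq_union_neg_seven_mul_sq_eq_sq_of_neg_one_not_mem hF⟩
end
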